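/- arXiv:2001.09377 — 2 statements merged into one kernel-verified Lean document; each statement's English description precedes it below -/
import Mathlib

section
/- Let r, c, εr, εc ∈ ℝ^N with 0 ≤ r ≤ 1, 0 ≤ c ≤ 1, εr ≥ 0, εc ≥ 0 componentwise, A a matrix, and d ∈ ℝ. Let y₁ maximize rᵀy over D₁ = {y : Ay = 0, 1ᵀy = 1, y ≥ 0, cᵀy ≤ d} and let y₂ maximize (r+εr)ᵀy over D₂ = {y : Ay = 0, 1ᵀy = 1, y ≥ 0, (c+εc)ᵀy ≤ d}, both nonempty. If there exist y₀ ∈ D₂ and constants α, β > 0 with rᵀ(y₁ − y₀) = α and cᵀ(y₁ − y₀) = β, then rᵀ(y₁ − y₂) ≤ (2α/β)·‖εc‖₁ + ‖εr‖₁. -/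
open Matrix Finset

/-!
Move from the nominal optimum `y₁` towards the cheaper point `y₀` by the fraction
`t = min 1 (‖εc‖₁ / β)`. This lowers the nominal cost by `min β ‖εc‖₁`, which pays for the
pessimistic surcharge `εc ⬝ᵥ y ≤ ‖εc‖₁` (or lands on `y₀` itself), so the mixed point is feasible
for the perturbed LP, while it loses only `t * α ≤ (α / β) * ‖εc‖₁` of reward. Optimality of `y₂`
for `r + εr` then bounds the gap, since `εr ≥ 0` shifts the value of a probability vector by at
most `‖εr‖₁`.
-/

open AffineMap

section

variable {ι κ : Type*} [Fintype ι]

theorem dotProduct_le_sum_abs_of_mem_stdSimplex {v y : ι → ℝ} (hy : y ∈ stdSimplex ℝ ι) :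
    v ⬝ᵥ y ≤ ∑ j, |v j| :=
  Finset.sum_le_sum fun j _ =>
    calc v j * y j ≤ |v j| * y j := mul_le_mul_of_nonneg_right (le_abs_self _) (hy.1 j)
      _ ≤ |v j| * 1 := mul_le_mul_of_nonneg_left (mem_Icc_of_mem_stdSimplex hy j).2 (abs_nonneg _)
      _ = |v j| := mul_one _

theorem dotProduct_lineMap (v a b : ι → ℝ) (t : ℝ) :
    v ⬝ᵥ lineMap a b t = v ⬝ᵥ a - t * v ⬝ᵥ (a - b) := by
  rw [lineMap_apply_module, dotProduct_add, dotProduct_smul, dotProduct_smul, dotProduct_sub,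
    smul_eq_mul, smul_eq_mul]
  ring

def kerSimplex (A : Matrix κ ι ℝ) : Set (ι → ℝ) :=
  {y | A *ᵥ y = 0} ∩ stdSimplex ℝ ι

theorem convex_kerSimplex (A : Matrix κ ι ℝ) : Convex ℝ (kerSimplex A) :=
  (LinearMap.ker A.mulVecLin).convex.inter (convex_stdSimplex ℝ ι)

def lpFeasible (A : Matrix κ ι ℝ) (c : ι → ℝ) (d : ℝ) : Set (ι → ℝ) :=
  {y | A *ᵥ y = 0 ∧ (∑ j, y j) = 1 ∧ (∀ j, 0 ≤ y j) ∧ c ⬝ᵥ y ≤ d}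

theorem mem_lpFeasible {A : Matrix κ ι ℝ} {c : ι → ℝ} {d : ℝ} {y : ι → ℝ} :
    y ∈ lpFeasible A c d ↔ y ∈ kerSimplex A ∧ c ⬝ᵥ y ≤ d := by
  simp only [lpFeasible, kerSimplex, stdSimplex, Set.mem_ofPred_eq, Set.mem_inter_iff]
  tauto

theorem lineMap_mem_lpFeasible {A : Matrix κ ι ℝ} {c εc y₁ y₀ : ι → ℝ} {d : ℝ}
    (hy₁ : y₁ ∈ lpFeasible A c d) (hy₀ : y₀ ∈ lpFeasible A (c + εc) d)
    {β : ℝ} (hcβ : c ⬝ᵥ (y₁ - y₀) = β) (hβ : 0 < β) :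
    lineMap y₁ y₀ (min 1 ((∑ j, |εc j|) / β)) ∈ lpFeasible A (c + εc) d := by
  set e := ∑ j, |εc j|
  rcases lt_or_ge β e with hβe | heβ
  · rwa [min_eq_left ((one_le_div hβ).2 hβe.le), lineMap_apply_one]
  rw [min_eq_right ((div_le_one hβ).2 heβ)]
  rw [mem_lpFeasible] at hy₁ hy₀ ⊢
  have hyt : lineMap y₁ y₀ (e / β) ∈ kerSimplex A :=
    (convex_kerSimplex A).lineMap_mem hy₁.1 hy₀.1
      ⟨div_nonneg (Finset.sum_nonneg fun j _ => abs_nonneg _) hβ.le, (div_le_one hβ).2 heβ⟩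
  refine ⟨hyt, ?_⟩
  have hc : c ⬝ᵥ lineMap y₁ y₀ (e / β) = c ⬝ᵥ y₁ - e := by
    rw [dotProduct_lineMap, hcβ, div_mul_cancel₀ _ hβ.ne']
  have hεc : εc ⬝ᵥ lineMap y₁ y₀ (e / β) ≤ e := dotProduct_le_sum_abs_of_mem_stdSimplex hyt.2
  rw [add_dotProduct]
  linarith [hy₁.2]

end

theorem robust_lp_perturbation_general
    {N M : ℕ} (r c εr εc : Fin N → ℝ) (A : Matrix (Fin M) (Fin N) ℝ) (d : ℝ)
    (hεr : ∀ j, 0 ≤ εr j)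
    (D₁ : Set (Fin N → ℝ)) (D₂ : Set (Fin N → ℝ))
    (hD₁ : D₁ = {y | A *ᵥ y = 0 ∧ (∑ j, y j) = 1 ∧ (∀ j, 0 ≤ y j) ∧ c ⬝ᵥ y ≤ d})
    (hD₂ : D₂ = {y | A *ᵥ y = 0 ∧ (∑ j, y j) = 1 ∧ (∀ j, 0 ≤ y j) ∧ (c + εc) ⬝ᵥ y ≤ d})
    (y₁ y₂ : Fin N → ℝ)
    (hy₁ : y₁ ∈ D₁)
    (hy₂ : y₂ ∈ D₂) (hy₂max : ∀ y ∈ D₂, (r + εr) ⬝ᵥ y ≤ (r + εr) ⬝ᵥ y₂)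
    (y₀ : Fin N → ℝ) (hy₀ : y₀ ∈ D₂)
    (α β : ℝ) (hα : 0 < α) (hβ : 0 < β)
    (hrα : r ⬝ᵥ (y₁ - y₀) = α) (hcβ : c ⬝ᵥ (y₁ - y₀) = β) :
    r ⬝ᵥ (y₁ - y₂) ≤ (2 * α / β) * (∑ j, |εc j|) + ∑ j, |εr j| := by
  subst hD₁ hD₂
  set e := ∑ j, |εc j|
  set t := min 1 (e / β)
  have hyt : lineMap y₁ y₀ t ∈ lpFeasible A (c + εc) d :=
    lineMap_mem_lpFeasible hy₁ hy₀ hcβ hβ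
  have hopt := hy₂max _ hyt
  have hεr_t : 0 ≤ εr ⬝ᵥ lineMap y₁ y₀ t :=
    dotProduct_nonneg_of_nonneg hεr (mem_lpFeasible.1 hyt).1.2.1
  have hεr₂ : εr ⬝ᵥ y₂ ≤ ∑ j, |εr j| :=
    dotProduct_le_sum_abs_of_mem_stdSimplex (mem_lpFeasible.1 hy₂).1.2
  have htα : t * α ≤ 2 * α / β * e :=
    calc t * α ≤ e / β * α := mul_le_mul_of_nonneg_right (min_le_right _ _) hα.le
      _ = α / β * e := by ring
      _ ≤ 2 * α / β * e := by
        gcongr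
        linarith
  rw [add_dotProduct, add_dotProduct, dotProduct_lineMap, hrα] at hopt
  rw [dotProduct_sub]
  linarith

/-- Robust LP perturbation lemma (Lemma 2): reward gap between the optimizer of the
nominal LP and the optimizer of the perturbed (optimistic/pessimistic) LP. -/
theorem robust_lp_perturbation
    {N M : ℕ} (r c εr εc : Fin N → ℝ) (A : Matrix (Fin M) (Fin N) ℝ) (d : ℝ)
    (hr0 : ∀ j, 0 ≤ r j) (hr1 : ∀ j, r j ≤ 1)
    (hc0 : ∀ j, 0 ≤ c j) (hc1 : ∀ j, c j ≤ 1)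
    (hεr : ∀ j, 0 ≤ εr j) (hεc : ∀ j, 0 ≤ εc j)
    (D₁ : Set (Fin N → ℝ)) (D₂ : Set (Fin N → ℝ))
    (hD₁ : D₁ = {y | A *ᵥ y = 0 ∧ (∑ j, y j) = 1 ∧ (∀ j, 0 ≤ y j) ∧ c ⬝ᵥ y ≤ d})
    (hD₂ : D₂ = {y | A *ᵥ y = 0 ∧ (∑ j, y j) = 1 ∧ (∀ j, 0 ≤ y j) ∧ (c + εc) ⬝ᵥ y ≤ d})
    (y₁ y₂ : Fin N → ℝ)
    (hy₁ : y₁ ∈ D₁) (hy₁max : ∀ y ∈ D₁, r ⬝ᵥ y ≤ r ⬝ᵥ y₁)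
    (hy₂ : y₂ ∈ D₂) (hy₂max : ∀ y ∈ D₂, (r + εr) ⬝ᵥ y ≤ (r + εr) ⬝ᵥ y₂)
    (y₀ : Fin N → ℝ) (hy₀ : y₀ ∈ D₂)
    (α β : ℝ) (hα : 0 < α) (hβ : 0 < β)
    (hrα : r ⬝ᵥ (y₁ - y₀) = α) (hcβ : c ⬝ᵥ (y₁ - y₀) = β) :
    r ⬝ᵥ (y₁ - y₂) ≤ (2 * α / β) * (∑ j, |εc j|) + ∑ j, |εr j| :=
  robust_lp_perturbation_general r c εr εc A d hεr D₁ D₂ hD₁ hD₂ y₁ y₂ hy₁ hy₂ hy₂max y₀ hy₀ α β hα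
    hβ hrα hcβ
end

section
/- Let ȳ solve max{r̄ᵀy : y ∈ F, c̄ᵀy ≤ d componentwise} and ỹ solve max{r̃ᵀy : y ∈ F, c̃ᵀy ≤ d componentwise}, where F is a convex set of probability vectors, there are m cost vectors, and for every coordinate |r̃ − r̄| ≤ 2ε and |c̃_i − c̄_i| ≤ 2ε componentwise for ε ∈ ℝ^N, ε ≥ 0. Assume there exists y₀ ∈ F with r̄ᵀ(ȳ − y₀) = α > 0 and c̄_iᵀ(ȳ − y₀) = β > 0 for all i, and y₀ satisfies all perturbed constraints. Then r̄ᵀ(ȳ − ỹ) ≤ 2(2αm/β + 1)·‖ε‖₁. -/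
open Matrix Finset

/-!
Move from `ȳ` towards the strictly feasible point `y₀` by the step `t = min 1 (2‖ε‖₁ / β)`.
On the simplex a `2ε`-perturbation changes a linear functional by at most `2‖ε‖₁`, and the step
either lowers every nominal cost by `tβ = 2‖ε‖₁` or reaches `y₀`, so the new point is feasible for
the perturbed constraints. Comparing `ỹ` with it costs `tα ≤ 2α‖ε‖₁/β` of nominal reward, plus `2‖ε‖₁` for
replacing `r̃` by `r̄`.
-/

section Simplex

variable {ι : Type*} [Fintype ι]

theorem dotProduct_le_sum_of_abs_le {w x δ : ι → ℝ} (hw : ∀ j, |w j| ≤ δ j)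
    (hx : ∀ j, |x j| ≤ 1) : w ⬝ᵥ x ≤ ∑ j, δ j :=
  sum_le_sum fun j _ =>
    calc w j * x j ≤ |w j| * |x j| := (le_abs_self _).trans (abs_mul _ _).le
      _ ≤ δ j * 1 := mul_le_mul (hw j) (hx j) (abs_nonneg _) ((abs_nonneg _).trans (hw j))
      _ = δ j := mul_one _

theorem abs_le_one_of_mem_stdSimplex {x : ι → ℝ} (hx : x ∈ stdSimplex ℝ ι) (j : ι) :
    |x j| ≤ 1 := by
  obtain ⟨h0, h1⟩ := mem_Icc_of_mem_stdSimplex hx j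
  exact abs_le.2 ⟨by linarith, h1⟩

theorem abs_sub_le_one_of_mem_stdSimplex {x y : ι → ℝ} (hx : x ∈ stdSimplex ℝ ι)
    (hy : y ∈ stdSimplex ℝ ι) (j : ι) : |x j - y j| ≤ 1 :=
  abs_sub_le_of_nonneg_of_le (mem_Icc_of_mem_stdSimplex hx j).1 (mem_Icc_of_mem_stdSimplex hx j).2
    (mem_Icc_of_mem_stdSimplex hy j).1 (mem_Icc_of_mem_stdSimplex hy j).2

theorem dotProduct_sub_le_of_perturbed_le {r r' x y y' δ : ι → ℝ}
    (hy : y ∈ stdSimplex ℝ ι) (hy' : y' ∈ stdSimplex ℝ ι) (hr : ∀ j, |r' j - r j| ≤ δ j)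
    (hopt : r' ⬝ᵥ y ≤ r' ⬝ᵥ y') : r ⬝ᵥ (x - y') ≤ r ⬝ᵥ (x - y) + ∑ j, δ j := by
  have hpert : (r - r') ⬝ᵥ (y - y') ≤ ∑ j, δ j :=
    dotProduct_le_sum_of_abs_le (fun j => by simpa [abs_sub_comm] using hr j)
      (abs_sub_le_one_of_mem_stdSimplex hy hy')
  simp only [dotProduct_sub, sub_dotProduct] at hpert ⊢
  linarith

theorem dotProduct_add_smul_sub (v x x₀ : ι → ℝ) (t : ℝ) :
    v ⬝ᵥ (x + t • (x₀ - x)) = v ⬝ᵥ x - t * v ⬝ᵥ (x - x₀) := by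
  rw [dotProduct_add, dotProduct_smul, ← neg_sub x, dotProduct_neg, smul_eq_mul]
  ring

theorem dotProduct_add_min_smul_sub_le {c c' x x₀ : ι → ℝ} {b β δ : ℝ} (hβ : 0 < β)
    (hx : c ⬝ᵥ x ≤ b) (hx₀ : c' ⬝ᵥ x₀ ≤ b) (hcβ : c ⬝ᵥ (x - x₀) = β)
    (hpert : (c' - c) ⬝ᵥ (x + min 1 (δ / β) • (x₀ - x)) ≤ δ) :
    c' ⬝ᵥ (x + min 1 (δ / β) • (x₀ - x)) ≤ b := by
  rcases min_cases 1 (δ / β) with ⟨hmin, -⟩ | ⟨hmin, -⟩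
  · rwa [hmin, one_smul, add_sub_cancel]
  · rw [hmin] at hpert ⊢
    rw [sub_dotProduct, dotProduct_add_smul_sub c, hcβ, div_mul_cancel₀ _ hβ.ne'] at hpert
    linarith

end Simplex

theorem multi_constraint_pseudo_regret_general
    {N m : ℕ} (rbar rtil : Fin N → ℝ) (cbar ctil : Fin m → Fin N → ℝ)
    (ε : Fin N → ℝ) (d : Fin m → ℝ)
    (F : Set (Fin N → ℝ)) (hFconv : Convex ℝ F)
    (hFprob : ∀ y ∈ F, (∑ j, y j) = 1 ∧ ∀ j, 0 ≤ y j)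
    (hr : ∀ j, |rtil j - rbar j| ≤ 2 * ε j)
    (hc : ∀ i j, |ctil i j - cbar i j| ≤ 2 * ε j)
    (ybar : Fin N → ℝ)
    (hybar : ybar ∈ F ∧ ∀ i, cbar i ⬝ᵥ ybar ≤ d i)
    (ytil : Fin N → ℝ)
    (hytil : ytil ∈ F ∧ ∀ i, ctil i ⬝ᵥ ytil ≤ d i)
    (hytilmax : ∀ y ∈ F, (∀ i, ctil i ⬝ᵥ y ≤ d i) → rtil ⬝ᵥ y ≤ rtil ⬝ᵥ ytil)
    (y₀ : Fin N → ℝ) (hy₀ : y₀ ∈ F) (hy₀feas : ∀ i, ctil i ⬝ᵥ y₀ ≤ d i)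
    (α β : ℝ) (hα : 0 < α) (hβ : 0 < β)
    (hrα : rbar ⬝ᵥ (ybar - y₀) = α)
    (hcβ : ∀ i, cbar i ⬝ᵥ (ybar - y₀) = β) :
    rbar ⬝ᵥ (ybar - ytil) ≤ 2 * (2 * α * m / β + 1) * ∑ j, |ε j| := by
  obtain ⟨hybarF, hybarC⟩ := hybar
  have hF : F ⊆ stdSimplex ℝ (Fin N) := fun y hy => ⟨(hFprob y hy).2, (hFprob y hy).1⟩
  set E := ∑ j, |ε j|
  have hsum : ∑ j, 2 * |ε j| = 2 * E := (mul_sum _ _ _).symm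
  have h2ε (j : Fin N) : 2 * ε j ≤ 2 * |ε j| := by linarith [le_abs_self (ε j)]
  have hregret (y) (hy : y ∈ F) (hfeas : ∀ i, ctil i ⬝ᵥ y ≤ d i) :
      rbar ⬝ᵥ (ybar - ytil) ≤ rbar ⬝ᵥ (ybar - y) + 2 * E :=
    (dotProduct_sub_le_of_perturbed_le (hF hy) (hF hytil.1)
      (fun j => (hr j).trans (h2ε j)) (hytilmax y hy hfeas)).trans_eq (by rw [hsum])
  rcases Nat.eq_zero_or_pos m with rfl | hm
  · simpa using hregret ybar hybarF finZeroElim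
  set t := min 1 (2 * E / β)
  have ht : t ∈ Set.Icc 0 1 := ⟨le_min zero_le_one (by positivity), min_le_left _ _⟩
  have hyF := hFconv.add_smul_sub_mem hybarF hy₀ ht
  have hfeas (i : Fin m) : ctil i ⬝ᵥ (ybar + t • (y₀ - ybar)) ≤ d i :=
    dotProduct_add_min_smul_sub_le hβ (hybarC i) (hy₀feas i) (hcβ i) <|
      (dotProduct_le_sum_of_abs_le (fun j => (hc i j).trans (h2ε j))
        (abs_le_one_of_mem_stdSimplex (hF hyF))).trans_eq hsum
  have hm1 : (1 : ℝ) ≤ 2 * m := by norm_cast; omega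
  have hgap : rbar ⬝ᵥ (ybar - (ybar + t • (y₀ - ybar))) = t * α := by
    rw [dotProduct_sub, dotProduct_add_smul_sub, hrα, sub_sub_cancel]
  calc rbar ⬝ᵥ (ybar - ytil) ≤ t * α + 2 * E := hgap ▸ hregret _ hyF hfeas
    _ ≤ 2 * E / β * α + 2 * E := by gcongr; exact min_le_right _ _
    _ ≤ 2 * E / β * α * (2 * m) + 2 * E :=
      add_le_add_left (le_mul_of_one_le_right (by positivity) hm1) _
    _ = 2 * (2 * α * m / β + 1) * E := by ring

/-- Proposition 1 (multi-constraint pseudo-regret bound): with `m` cost constraints and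
componentwise `2ε` perturbations of reward and costs, the reward gap between the nominal
optimizer `ȳ` and the perturbed optimizer `ỹ` is at most `2(2αm/β + 1)·‖ε‖₁`. -/
theorem multi_constraint_pseudo_regret
    {N m : ℕ} (rbar rtil : Fin N → ℝ) (cbar ctil : Fin m → Fin N → ℝ)
    (ε : Fin N → ℝ) (hε : ∀ j, 0 ≤ ε j) (d : Fin m → ℝ)
    (F : Set (Fin N → ℝ)) (hFconv : Convex ℝ F)
    (hFprob : ∀ y ∈ F, (∑ j, y j) = 1 ∧ ∀ j, 0 ≤ y j)
    (hr : ∀ j, |rtil j - rbar j| ≤ 2 * ε j)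
    (hc : ∀ i j, |ctil i j - cbar i j| ≤ 2 * ε j)
    (ybar : Fin N → ℝ)
    (hybar : ybar ∈ F ∧ ∀ i, cbar i ⬝ᵥ ybar ≤ d i)
    (hybarmax : ∀ y ∈ F, (∀ i, cbar i ⬝ᵥ y ≤ d i) → rbar ⬝ᵥ y ≤ rbar ⬝ᵥ ybar)
    (ytil : Fin N → ℝ)
    (hytil : ytil ∈ F ∧ ∀ i, ctil i ⬝ᵥ ytil ≤ d i)
    (hytilmax : ∀ y ∈ F, (∀ i, ctil i ⬝ᵥ y ≤ d i) → rtil ⬝ᵥ y ≤ rtil ⬝ᵥ ytil)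
    (y₀ : Fin N → ℝ) (hy₀ : y₀ ∈ F) (hy₀feas : ∀ i, ctil i ⬝ᵥ y₀ ≤ d i)
    (α β : ℝ) (hα : 0 < α) (hβ : 0 < β)
    (hrα : rbar ⬝ᵥ (ybar - y₀) = α)
    (hcβ : ∀ i, cbar i ⬝ᵥ (ybar - y₀) = β) :
    rbar ⬝ᵥ (ybar - ytil) ≤ 2 * (2 * α * m / β + 1) * ∑ j, |ε j| :=
  multi_constraint_pseudo_regret_general rbar rtil cbar ctil ε d F hFconv hFprob hr hc ybar hybar
    ytil hytil hytilmax y₀ hy₀ hy₀feas α β hα hβ hrα hcβ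
end
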